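/- Let H be a 3-uniform hypergraph and let M be a matching of maximum size in H. Then there do not exist three distinct vertices v₁, v₂, v₃ ∈ V(H) \ V(M) and two distinct edges E, F ∈ M such that L_{v₁}(EF) = L_{v₂}(EF) = L_{v₃}(EF) and L_{v₁}(EF) contains a perfect matching. -/
import Mathlib


open Finset

lemma tri_disj {α : Type*} [DecidableEq α] {x y z x' y' z' : α}
    (h11 : x ≠ x') (h12 : x ≠ y') (h13 : x ≠ z')
    (h21 : y ≠ x') (h22 : y ≠ y') (h23 : y ≠ z')
    (h31 : z ≠ x') (h32 : z ≠ y') (h33 : z ≠ z') :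
    Disjoint ({x, y, z} : Finset α) ({x', y', z'} : Finset α) := by
  rw [Finset.disjoint_left]
  rintro w hw hw'
  simp only [Finset.mem_insert, Finset.mem_singleton] at hw hw'
  rcases hw with rfl | rfl | rfl <;> tauto

lemma tri_disj' {α : Type*} [DecidableEq α] {x y z : α} {G : Finset α}
    (h1 : x ∉ G) (h2 : y ∉ G) (h3 : z ∉ G) :
    Disjoint ({x, y, z} : Finset α) G := by
  rw [Finset.disjoint_left]
  rintro w hw
  simp only [Finset.mem_insert, Finset.mem_singleton] at hw
  rcases hw with rfl | rfl | rfl <;> assumption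

lemma tri_notMem {α : Type*} [DecidableEq α] {x y z v : α}
    (h1 : v ≠ x) (h2 : v ≠ y) (h3 : v ≠ z) :
    v ∉ ({x, y, z} : Finset α) := by
  simp only [Finset.mem_insert, Finset.mem_singleton]
  push_neg
  exact ⟨h1, h2, h3⟩

/-- Let `M` be a maximum matching in a 3-uniform hypergraph `H`. There
do not exist three distinct uncovered vertices `v₁, v₂, v₃` and distinct edges `E, F ∈ M`
such that the link graphs `L_{vᵢ}(EF)` all coincide and `L_{v₁}(EF)` contains a perfect
matching. -/
theorem stmt_11 (Vt : Type) [DecidableEq Vt]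
    (H : Finset (Finset Vt)) (h3 : ∀ e ∈ H, e.card = 3)
    (M : Finset (Finset Vt)) (hM : M ⊆ H)
    (hdisj : (M : Set (Finset Vt)).PairwiseDisjoint id)
    (hmax : ∀ M' ⊆ H, (M' : Set (Finset Vt)).PairwiseDisjoint id → M'.card ≤ M.card)
    (v₁ v₂ v₃ : Vt) (hv12 : v₁ ≠ v₂) (hv13 : v₁ ≠ v₃) (hv23 : v₂ ≠ v₃)
    (hv₁ : v₁ ∉ M.biUnion id) (hv₂ : v₂ ∉ M.biUnion id) (hv₃ : v₃ ∉ M.biUnion id)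
    (E F : Finset Vt) (hE : E ∈ M) (hF : F ∈ M) (hEF : E ≠ F)
    (heq12 : ∀ a ∈ E, ∀ b ∈ F, (({v₁, a, b} : Finset Vt) ∈ H ↔ ({v₂, a, b} : Finset Vt) ∈ H))
    (heq13 : ∀ a ∈ E, ∀ b ∈ F, (({v₁, a, b} : Finset Vt) ∈ H ↔ ({v₃, a, b} : Finset Vt) ∈ H))
    (hpm : ∃ f : Vt → Vt, Set.BijOn f ↑E ↑F ∧ ∀ a ∈ E, ({v₁, a, f a} : Finset Vt) ∈ H) :
    False := by
  obtain ⟨f, hbij, hf⟩ := hpm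
  obtain ⟨a1, a2, a3, h12, h13, h23, hEeq⟩ := Finset.card_eq_three.mp (h3 E (hM hE))
  have ha1 : a1 ∈ E := by rw [hEeq]; simp
  have ha2 : a2 ∈ E := by rw [hEeq]; simp
  have ha3 : a3 ∈ E := by rw [hEeq]; simp
  have hfa1 : f a1 ∈ F := hbij.mapsTo (Finset.mem_coe.mpr ha1)
  have hfa2 : f a2 ∈ F := hbij.mapsTo (Finset.mem_coe.mpr ha2)
  have hfa3 : f a3 ∈ F := hbij.mapsTo (Finset.mem_coe.mpr ha3)
  -- uncovered vertices avoid every edge of M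
  have hvnot1 : ∀ G ∈ M, v₁ ∉ G := fun G hG h => hv₁ (Finset.mem_biUnion.mpr ⟨G, hG, h⟩)
  have hvnot2 : ∀ G ∈ M, v₂ ∉ G := fun G hG h => hv₂ (Finset.mem_biUnion.mpr ⟨G, hG, h⟩)
  have hvnot3 : ∀ G ∈ M, v₃ ∉ G := fun G hG h => hv₃ (Finset.mem_biUnion.mpr ⟨G, hG, h⟩)
  -- E and F are disjoint
  have hEFd : Disjoint E F := hdisj (Finset.mem_coe.mpr hE) (Finset.mem_coe.mpr hF) hEF
  have hnEF : ∀ a ∈ E, a ∉ F := fun a ha => Finset.disjoint_left.mp hEFd ha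
  -- f injective on E
  have hfinj : ∀ a ∈ E, ∀ b ∈ E, f a = f b → a = b := fun a ha b hb h =>
    hbij.injOn (Finset.mem_coe.mpr ha) (Finset.mem_coe.mpr hb) h
  -- basic ne facts
  have hva : ∀ v, v ∉ M.biUnion id → ∀ a, (a ∈ E ∨ a ∈ F) → v ≠ a := by
    rintro v hv a (haE | haF) rfl
    · exact hv (Finset.mem_biUnion.mpr ⟨E, hE, haE⟩)
    · exact hv (Finset.mem_biUnion.mpr ⟨F, hF, haF⟩)
  have haf : ∀ a ∈ E, ∀ b ∈ F, a ≠ b := fun a ha b hb h => hnEF a ha (h ▸ hb)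
  -- the three new edges
  have he1H : ({v₁, a1, f a1} : Finset Vt) ∈ H := hf a1 ha1
  have he2H : ({v₂, a2, f a2} : Finset Vt) ∈ H := (heq12 a2 ha2 (f a2) hfa2).mp (hf a2 ha2)
  have he3H : ({v₃, a3, f a3} : Finset Vt) ∈ H := (heq13 a3 ha3 (f a3) hfa3).mp (hf a3 ha3)
  set e1 : Finset Vt := {v₁, a1, f a1} with he1def
  set e2 : Finset Vt := {v₂, a2, f a2} with he2def
  set e3 : Finset Vt := {v₃, a3, f a3} with he3def
  set M0 : Finset (Finset Vt) := (M.erase E).erase F with hM0def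
  have hM0 : ∀ G ∈ M0, G ∈ M ∧ G ≠ E ∧ G ≠ F := by
    intro G hG
    rw [hM0def, Finset.mem_erase, Finset.mem_erase] at hG
    exact ⟨hG.2.2, hG.2.1, hG.1⟩
  -- disjointness facts
  have D12 : Disjoint e1 e2 :=
    tri_disj hv12 (hva v₁ hv₁ a2 (Or.inl ha2)) (hva v₁ hv₁ (f a2) (Or.inr hfa2))
      (Ne.symm (hva v₂ hv₂ a1 (Or.inl ha1))) h12 (haf a1 ha1 (f a2) hfa2)
      (Ne.symm (hva v₂ hv₂ (f a1) (Or.inr hfa1))) (Ne.symm (haf a2 ha2 (f a1) hfa1))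
      (fun h => h12 (hfinj a1 ha1 a2 ha2 h))
  have D13 : Disjoint e1 e3 :=
    tri_disj hv13 (hva v₁ hv₁ a3 (Or.inl ha3)) (hva v₁ hv₁ (f a3) (Or.inr hfa3))
      (Ne.symm (hva v₃ hv₃ a1 (Or.inl ha1))) h13 (haf a1 ha1 (f a3) hfa3)
      (Ne.symm (hva v₃ hv₃ (f a1) (Or.inr hfa1))) (Ne.symm (haf a3 ha3 (f a1) hfa1))
      (fun h => h13 (hfinj a1 ha1 a3 ha3 h))
  have D23 : Disjoint e2 e3 :=
    tri_disj hv23 (hva v₂ hv₂ a3 (Or.inl ha3)) (hva v₂ hv₂ (f a3) (Or.inr hfa3))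
      (Ne.symm (hva v₃ hv₃ a2 (Or.inl ha2))) h23 (haf a2 ha2 (f a3) hfa3)
      (Ne.symm (hva v₃ hv₃ (f a2) (Or.inr hfa2))) (Ne.symm (haf a3 ha3 (f a2) hfa2))
      (fun h => h23 (hfinj a2 ha2 a3 ha3 h))
  have Dgen : ∀ G ∈ M0, ∀ v, v ∉ M.biUnion id → ∀ a ∈ E,
      Disjoint ({v, a, f a} : Finset Vt) G := by
    intro G hG v hv a ha
    obtain ⟨hGM, hGE, hGF⟩ := hM0 G hG
    refine tri_disj' (fun h => hv (Finset.mem_biUnion.mpr ⟨G, hGM, h⟩)) ?_ ?_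
    · exact fun h => Finset.disjoint_left.mp
        (hdisj (Finset.mem_coe.mpr hE) (Finset.mem_coe.mpr hGM) hGE.symm) ha h
    · exact fun h => Finset.disjoint_left.mp
        (hdisj (Finset.mem_coe.mpr hF) (Finset.mem_coe.mpr hGM) hGF.symm)
        (hbij.mapsTo (Finset.mem_coe.mpr ha)) h
  have D1 : ∀ G ∈ M0, Disjoint e1 G := fun G hG => Dgen G hG v₁ hv₁ a1 ha1
  have D2 : ∀ G ∈ M0, Disjoint e2 G := fun G hG => Dgen G hG v₂ hv₂ a2 ha2
  have D3 : ∀ G ∈ M0, Disjoint e3 G := fun G hG => Dgen G hG v₃ hv₃ a3 ha3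
  -- the new matching
  set M' : Finset (Finset Vt) := insert e1 (insert e2 (insert e3 M0)) with hM'def
  have hM'H : M' ⊆ H := by
    rw [hM'def]
    intro G hG
    simp only [Finset.mem_insert] at hG
    rcases hG with rfl | rfl | rfl | hG
    · exact he1H
    · exact he2H
    · exact he3H
    · exact hM (hM0 G hG).1
  have hmem : ∀ x ∈ M', x = e1 ∨ x = e2 ∨ x = e3 ∨ x ∈ M0 := by
    intro x hx
    rw [hM'def] at hx
    simpa using hx
  have hpd : (M' : Set (Finset Vt)).PairwiseDisjoint id := by
    intro x hx y hy hxy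
    have hx' := hmem x (Finset.mem_coe.mp hx)
    have hy' := hmem y (Finset.mem_coe.mp hy)
    rcases hx' with rfl | rfl | rfl | hx' <;> rcases hy' with rfl | rfl | rfl | hy'
    · exact absurd rfl hxy
    · exact D12
    · exact D13
    · exact D1 y hy'
    · exact D12.symm
    · exact absurd rfl hxy
    · exact D23
    · exact D2 y hy'
    · exact D13.symm
    · exact D23.symm
    · exact absurd rfl hxy
    · exact D3 y hy'
    · exact (D1 x hx').symm
    · exact (D2 x hx').symm
    · exact (D3 x hx').symm
    · exact hdisj (Finset.mem_coe.mpr (hM0 x hx').1) (Finset.mem_coe.mpr (hM0 y hy').1) hxy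
  -- cardinality
  have hv1e1 : v₁ ∈ e1 := by rw [he1def]; exact Finset.mem_insert_self _ _
  have hv2e2 : v₂ ∈ e2 := by rw [he2def]; exact Finset.mem_insert_self _ _
  have hv3e3 : v₃ ∈ e3 := by rw [he3def]; exact Finset.mem_insert_self _ _
  have n3 : e3 ∉ M0 := fun h => hvnot3 e3 (hM0 e3 h).1 hv3e3
  have n2 : e2 ∉ insert e3 M0 := by
    intro h
    rcases Finset.mem_insert.mp h with h | h
    · exact (Finset.disjoint_left.mp (h ▸ D23) hv2e2) hv2e2
    · exact hvnot2 e2 (hM0 e2 h).1 hv2e2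
  have n1 : e1 ∉ insert e2 (insert e3 M0) := by
    intro h
    rcases Finset.mem_insert.mp h with h | h
    · exact (Finset.disjoint_left.mp (h ▸ D12) hv1e1) hv1e1
    rcases Finset.mem_insert.mp h with h | h
    · exact (Finset.disjoint_left.mp (h ▸ D13) hv1e1) hv1e1
    · exact hvnot1 e1 (hM0 e1 h).1 hv1e1
  have hFmem : F ∈ M.erase E := Finset.mem_erase.mpr ⟨hEF.symm, hF⟩
  have c0 : M0.card = M.card - 2 := by
    rw [hM0def, Finset.card_erase_of_mem hFmem, Finset.card_erase_of_mem hE]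
    omega
  have hM2 : 2 ≤ M.card := by
    have : ({E, F} : Finset (Finset Vt)) ⊆ M := by
      intro x hx
      simp only [Finset.mem_insert, Finset.mem_singleton] at hx
      rcases hx with rfl | rfl
      · exact hE
      · exact hF
    calc 2 = ({E, F} : Finset (Finset Vt)).card := (Finset.card_pair hEF).symm
    _ ≤ M.card := Finset.card_le_card this
  have hcard : M'.card = M.card + 1 := by
    rw [hM'def, Finset.card_insert_of_notMem n1, Finset.card_insert_of_notMem n2,
      Finset.card_insert_of_notMem n3, c0]
    omega
  have := hmax M' hM'H hpd
  omega
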